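/- Let L have weights (2,2,p,q) and let ℓ, z ∈ [s, s+δ] with ℓ ≱ z. Then ℓ − z ≤ 2c + ω, and consequently (2c − z + z_i x_i) − (3c − ℓ) ≤ 2c + ω for every 1 ≤ i ≤ 4. -/
import Mathlib


/-- The subgroup of relations `p i • x_i - c` in the free abelian group on `x_1,…,x_n,c`. -/
def Lrel (n : ℕ) (p : Fin n → ℤ) : AddSubgroup ((Fin n → ℤ) × ℤ) :=
  AddSubgroup.closure {v | ∃ i : Fin n, v = (Pi.single i (p i), -1)}

/-- The Geigle-Lenzing group `L = ⟨x_1,…,x_n,c⟩ / ⟨p_i x_i - c⟩`. -/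
abbrev Lgrp (n : ℕ) (p : Fin n → ℤ) : Type :=
  ((Fin n → ℤ) × ℤ) ⧸ Lrel n p

/-- The generator `x_i` of `L`. -/
def Lx (n : ℕ) (p : Fin n → ℤ) (i : Fin n) : Lgrp n p :=
  QuotientAddGroup.mk (Pi.single i 1, 0)

/-- The canonical element `c` of `L`. -/
def Lc (n : ℕ) (p : Fin n → ℤ) : Lgrp n p :=
  QuotientAddGroup.mk (0, 1)

/-- The positive cone `L_+`, the submonoid generated by `x_1,…,x_n,c`. -/
def Lplus (n : ℕ) (p : Fin n → ℤ) : AddSubmonoid (Lgrp n p) :=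
  AddSubmonoid.closure (Set.range (Lx n p) ∪ {Lc n p})

namespace GLpq

variable (p q : ℤ)

/-- The weight sequence `(2,2,p,q)`. -/
def w : Fin 4 → ℤ := ![2, 2, p, q]

/-- The generator `x_i`. -/
def X (i : Fin 4) : Lgrp 4 (w p q) := Lx 4 (w p q) i

/-- The canonical element `c`. -/
def C : Lgrp 4 (w p q) := Lc 4 (w p q)

/-- The positive cone `L_+`. -/
def pos : AddSubmonoid (Lgrp 4 (w p q)) := Lplus 4 (w p q)

/-- The element `Σ l_i x_i`. -/
def elt (l : Fin 4 → ℤ) : Lgrp 4 (w p q) := ∑ t, l t • X p q t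

/-- `s = x_1 + x_2 + x_3 + x_4`. -/
def s : Lgrp 4 (w p q) := ∑ t, X p q t

/-- The dualizing element `ω = c − s`. -/
def om : Lgrp 4 (w p q) := C p q - s p q

/-- The partial order: `a ≤ b` iff `b − a ∈ L_+`. -/
def le (a b : Lgrp 4 (w p q)) : Prop := b - a ∈ pos p q

/-- The condition for `Σ l_i x_i` to lie in `[s, s+δ]`:
`l_1 = l_2 = 1`, `1 ≤ l_3 ≤ p−1`, `1 ≤ l_4 ≤ q−1`. -/
def inInterval (l : Fin 4 → ℤ) : Prop :=
  l 0 = 1 ∧ l 1 = 1 ∧ 1 ≤ l 2 ∧ l 2 ≤ p - 1 ∧ 1 ≤ l 3 ∧ l 3 ≤ q - 1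

end GLpq

section Aux
open GLpq
variable (p q : ℤ)

lemma GLpq.hX_mem (i : Fin 4) : X p q i ∈ pos p q :=
  AddSubmonoid.subset_closure (Or.inl ⟨i, rfl⟩)

lemma GLpq.hC_mem : C p q ∈ pos p q :=
  AddSubmonoid.subset_closure (Or.inr rfl)

lemma GLpq.smul_mem_pos {n : ℤ} (hn : 0 ≤ n) {x : Lgrp 4 (w p q)} (hx : x ∈ pos p q) :
    n • x ∈ pos p q := by
  lift n to ℕ using hn
  rw [natCast_zsmul]
  exact AddSubmonoid.nsmul_mem _ hx _

lemma GLpq.rel (i : Fin 4) : (w p q i) • X p q i = C p q := by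
  show (w p q i) • (QuotientAddGroup.mk _ : Lgrp 4 (w p q)) = QuotientAddGroup.mk _
  rw [← QuotientAddGroup.mk_zsmul, QuotientAddGroup.eq]
  have : -((w p q i) • ((Pi.single i 1 : Fin 4 → ℤ), (0:ℤ))) + ((0 : Fin 4 → ℤ), (1:ℤ)) =
      -((Pi.single i (w p q i) : Fin 4 → ℤ), (-1:ℤ)) := by
    refine Prod.ext ?_ ?_ <;> simp
    funext j
    by_cases hj : j = i <;> simp [hj, Pi.single_apply]
  rw [this]
  exact neg_mem (AddSubgroup.subset_closure ⟨i, rfl⟩)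

end Aux

open GLpq in
/-- If `ℓ, z ∈ [s, s+δ]` and `ℓ ≱ z`, then `ℓ − z ≤ 2c + ω`, and consequently
`(2c − z + z_i x_i) − (3c − ℓ) ≤ 2c + ω` for every `i`. -/
theorem sub_le (p q : ℤ) (hp : 2 ≤ p) (hq : 2 ≤ q) (l z : Fin 4 → ℤ)
    (hl : inInterval p q l) (hz : inInterval p q z)
    (h : ¬ le p q (elt p q z) (elt p q l)) :
    le p q (elt p q l - elt p q z) ((2 : ℤ) • C p q + om p q) ∧
    ∀ i : Fin 4,
      le p q (((2 : ℤ) • C p q - elt p q z + z i • X p q i) -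
          ((3 : ℤ) • C p q - elt p q l))
        ((2 : ℤ) • C p q + om p q) := by
  obtain ⟨hl0, hl1, hl2a, hl2b, hl3a, hl3b⟩ := hl
  obtain ⟨hz0, hz1, hz2a, hz2b, hz3a, hz3b⟩ := hz
  have rel0 : (2:ℤ) • X p q 0 = C p q := by simpa [w] using rel p q 0
  have rel1 : (2:ℤ) • X p q 1 = C p q := by simpa [w] using rel p q 1
  have rel2 : p • X p q 2 = C p q := by simpa [w] using rel p q 2
  have rel3 : q • X p q 3 = C p q := by simpa [w] using rel p q 3
  have main : (2 : ℤ) • C p q + om p q - (elt p q l - elt p q z) ∈ pos p q := by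
    rcases le_or_gt 0 (l 2 - z 2) with ha | ha
    · rcases le_or_gt 0 (l 3 - z 3) with hb | hb
      · -- contradiction with h
        exfalso
        apply h
        show elt p q l - elt p q z ∈ pos p q
        have key : elt p q l - elt p q z =
            (l 2 - z 2) • X p q 2 + (l 3 - z 3) • X p q 3 := by
          simp only [elt, Fin.sum_univ_four, hl0, hl1, hz0, hz1]
          module
        rw [key]
        exact add_mem (smul_mem_pos p q ha (hX_mem p q 2))
          (smul_mem_pos p q hb (hX_mem p q 3))
      · -- a ≥ 0, b < 0 : use rel2
        have key : (2 : ℤ) • C p q + om p q - (elt p q l - elt p q z) =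
            X p q 0 + X p q 1 + (p - 1 - (l 2 - z 2)) • X p q 2 +
              (z 3 - l 3 - 1) • X p q 3 := by
          simp only [elt, om, s, Fin.sum_univ_four, hl0, hl1, hz0, hz1]
          linear_combination (norm := module) - rel0 - rel1 - rel2
        rw [key]
        exact add_mem (add_mem (add_mem (hX_mem p q 0) (hX_mem p q 1))
          (smul_mem_pos p q (by omega) (hX_mem p q 2)))
          (smul_mem_pos p q (by omega) (hX_mem p q 3))
    · rcases le_or_gt 0 (l 3 - z 3) with hb | hb
      · -- a < 0, b ≥ 0 : use rel3
        have key : (2 : ℤ) • C p q + om p q - (elt p q l - elt p q z) =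
            X p q 0 + X p q 1 + (z 2 - l 2 - 1) • X p q 2 +
              (q - 1 - (l 3 - z 3)) • X p q 3 := by
          simp only [elt, om, s, Fin.sum_univ_four, hl0, hl1, hz0, hz1]
          linear_combination (norm := module) - rel0 - rel1 - rel3
        rw [key]
        exact add_mem (add_mem (add_mem (hX_mem p q 0) (hX_mem p q 1))
          (smul_mem_pos p q (by omega) (hX_mem p q 2)))
          (smul_mem_pos p q (by omega) (hX_mem p q 3))
      · -- a < 0, b < 0
        have key : (2 : ℤ) • C p q + om p q - (elt p q l - elt p q z) =
            X p q 0 + X p q 1 + C p q + (z 2 - l 2 - 1) • X p q 2 +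
              (z 3 - l 3 - 1) • X p q 3 := by
          simp only [elt, om, s, Fin.sum_univ_four, hl0, hl1, hz0, hz1]
          linear_combination (norm := module) - rel0 - rel1
        rw [key]
        exact add_mem (add_mem (add_mem (add_mem (hX_mem p q 0) (hX_mem p q 1))
          (hC_mem p q))
          (smul_mem_pos p q (by omega) (hX_mem p q 2)))
          (smul_mem_pos p q (by omega) (hX_mem p q 3))
  refine ⟨main, fun i => ?_⟩
  show (2 : ℤ) • C p q + om p q -
      (((2 : ℤ) • C p q - elt p q z + z i • X p q i) - ((3 : ℤ) • C p q - elt p q l)) ∈ pos p q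
  have key : (2 : ℤ) • C p q + om p q -
      (((2 : ℤ) • C p q - elt p q z + z i • X p q i) - ((3 : ℤ) • C p q - elt p q l)) =
      ((2 : ℤ) • C p q + om p q - (elt p q l - elt p q z)) + (w p q i - z i) • X p q i := by
    linear_combination (norm := module) - rel p q i
  rw [key]
  refine add_mem main (smul_mem_pos p q ?_ (hX_mem p q i))
  fin_cases i <;> simp [w] <;> omega
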